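/- Assume D = 0 and T = 1, and define H(a) = −κ·∑_{k} a_k − (1/2)·∑_{k}∑_{j ~ k} a_j·a_k. Let a : [0,∞) → ℝ^L be a differentiable solution of a'(t) = f(a(t)) with a_i(0) ≥ 0 for all i. Then for every t ≥ 0, (d/dt) H(a(t)) = −(1/2)·∑_{k}∑_{j ~ k} q_{kj}(a(t))·q_{jk}(a(t))·( N_k(a(t)) − N_j(a(t)) )², and in particular (d/dt) H(a(t)) ≤ 0; that is, H is a Lyapunov function for the pure transport process. -/

import Mathlib

open Finset Filter

/-- `auxN G κ a i = κ + ∑_{j ~ i} a_j`. -/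
noncomputable def auxN {L : ℕ} (G : SimpleGraph (Fin L)) [DecidableRel G.Adj] (κ : ℝ)
    (a : Fin L → ℝ) (i : Fin L) : ℝ :=
  κ + ∑ j ∈ G.neighborFinset i, a j

/-- The auxin transport vector field
`f_i(a) = D·∑_{k ~ i}(a_k − a_i) + T·∑_{k ~ i}(a_k·a_i/N_k(a) − a_i·a_k/N_i(a))`. -/
noncomputable def auxF {L : ℕ} (G : SimpleGraph (Fin L)) [DecidableRel G.Adj] (κ D T : ℝ)
    (a : Fin L → ℝ) (i : Fin L) : ℝ :=
  D * ∑ k ∈ G.neighborFinset i, (a k - a i) +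
    T * ∑ k ∈ G.neighborFinset i,
      (a k * a i / auxN G κ a k - a i * a k / auxN G κ a i)

/-!
The gradient of `H` is `-N`, so along a solution `dH/dt = -∑_k N_k f_k(a)`. Expanding
`N_k f_k = ∑_{j~k} a_j a_k (N_k/N_j - 1)` and symmetrising over the edges of `G` gives
`-(1/2)·∑_k ∑_{j~k} q_{kj} q_{jk} (N_k - N_j)²`.

The sign needs `a(t) ≥ 0`. The system has the Kolmogorov form `a_i' = r_i(a)·a_i`, with `r`
continuous wherever all `N_j > 0`, an open set containing the nonnegative orthant. By uniqueness
for the linear equation `u' = r u`, a coordinate that vanishes stays zero, so no coordinate can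
change sign; a continuation argument then keeps the whole orthant invariant.
-/

open Set

theorem eqOn_zero_of_forall_hasDerivAt_mul {u h : ℝ → ℝ} {σ τ : ℝ}
    (hu : ∀ s ∈ Icc σ τ, HasDerivAt u (h s * u s) s) (hh : ContinuousOn h (Icc σ τ))
    (h₀ : u σ = 0) : EqOn u 0 (Icc σ τ) := by
  obtain ⟨K, hK⟩ := (isCompact_Icc.image_of_continuousOn hh.nnnorm).bddAbove
  refine ODE_solution_unique_of_mem_Icc_right (v := fun s x => h s • x) (s := fun _ => univ)
    (g := fun _ => 0)
    (fun s hs =>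
      ((lipschitzWith_smul (h s)).weaken (hK ⟨s, Ico_subset_Icc_self hs, rfl⟩)).lipschitzOnWith)
    (fun s hs => (hu s hs).continuousAt.continuousWithinAt)
    (fun s hs => (hu s (Ico_subset_Icc_self hs)).hasDerivWithinAt)
    (fun _ _ => trivial) continuousOn_const
    (fun s _ => by simpa using hasDerivWithinAt_const s (Ici s) (0 : ℝ))
    (fun _ _ => trivial) h₀

theorem nonneg_of_forall_hasDerivAt_mul {u h : ℝ → ℝ} {σ τ : ℝ}
    (hu : ∀ s ∈ Icc σ τ, HasDerivAt u (h s * u s) s) (hh : ContinuousOn h (Icc σ τ))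
    (h₀ : 0 ≤ u σ) : ∀ s ∈ Icc σ τ, 0 ≤ u s := by
  intro t ht
  by_contra! hneg
  have hcont : ContinuousOn u (Icc σ t) := fun s hs =>
    (hu s ⟨hs.1, hs.2.trans ht.2⟩).continuousAt.continuousWithinAt
  obtain ⟨t₀, ht₀, hzero⟩ := intermediate_value_Icc' ht.1 hcont ⟨hneg.le, h₀⟩
  have hsub : Icc t₀ t ⊆ Icc σ τ := Icc_subset_Icc ht₀.1 ht.2
  have := eqOn_zero_of_forall_hasDerivAt_mul (fun s hs => hu s (hsub hs)) (hh.mono hsub) hzero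
    ⟨ht₀.2, le_rfl⟩
  simp only [Pi.zero_apply] at this
  linarith

theorem nonneg_of_hasDerivAt_kolmogorov {ι : Type*} [Fintype ι] {a : ℝ → ι → ℝ}
    {g : (ι → ℝ) → ι → ℝ} {U : Set (ι → ℝ)} (hU : IsOpen U) (hIci : Set.Ici 0 ⊆ U)
    (hg : ContinuousOn g U) (ha : ∀ t, 0 ≤ t → HasDerivAt a (fun i => g (a t) i * a t i) t)
    (h₀ : 0 ≤ a 0) : ∀ t, 0 ≤ t → 0 ≤ a t := by
  intro t₁ ht₁
  have hcont : ContinuousOn a (Set.Ici 0) := fun s hs =>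
    (ha s hs).continuousAt.continuousWithinAt
  suffices Icc 0 t₁ ⊆ a ⁻¹' Set.Ici 0 from this ⟨ht₁, le_rfl⟩
  refine IsClosed.Icc_subset_of_forall_exists_gt ?_ h₀ ?_
  · rw [Set.inter_comm]
    exact (hcont.mono Icc_subset_Ici_self).preimage_isClosed_of_isClosed isClosed_Icc isClosed_Ici
  rintro x ⟨hx, hx₀, -⟩ y hxy
  obtain ⟨ε, hε, hball⟩ := Metric.eventually_nhds_iff.1
    ((ha x hx₀).continuousAt.eventually_mem (hU.mem_nhds (hIci hx)))
  set τ := min y (x + ε / 2)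
  have hxτ : x < τ := lt_min hxy (by linarith)
  have hIcc : ∀ s ∈ Icc x τ, 0 ≤ s ∧ a s ∈ U := fun s hs =>
    ⟨hx₀.trans hs.1, hball (by
      rw [Real.dist_eq, abs_of_nonneg (sub_nonneg.2 hs.1)]
      linarith [hs.2.trans (min_le_right _ _)])⟩
  refine ⟨τ, fun i => ?_, hxτ, min_le_left _ _⟩
  have hgi : ContinuousOn (fun s => g (a s) i) (Icc x τ) :=
    (continuous_apply i).comp_continuousOn
      (hg.comp (hcont.mono fun s hs => (hIcc s hs).1) fun s hs => (hIcc s hs).2)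
  exact nonneg_of_forall_hasDerivAt_mul (u := fun s => a s i)
    (fun s hs => hasDerivAt_pi.1 (ha s (hIcc s hs).1) i) hgi (hx i) τ ⟨hxτ.le, le_rfl⟩

theorem SimpleGraph.sum_sum_neighborFinset_comm {V M : Type*} [Fintype V] [AddCommMonoid M]
    (G : SimpleGraph V) [DecidableRel G.Adj] (F : V → V → M) :
    ∑ k, ∑ j ∈ G.neighborFinset k, F j k = ∑ k, ∑ j ∈ G.neighborFinset k, F k j :=
  Finset.sum_comm' fun k j => by simp [G.adj_comm]

section Auxin

variable {L : ℕ} (G : SimpleGraph (Fin L)) [DecidableRel G.Adj] {κ : ℝ}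

noncomputable def auxH (κ : ℝ) (x : Fin L → ℝ) : ℝ :=
  -κ * ∑ k, x k - (1 / 2) * ∑ k, ∑ j ∈ G.neighborFinset k, x j * x k

noncomputable def auxDissipation (κ : ℝ) (x : Fin L → ℝ) : ℝ :=
  ∑ k, ∑ j ∈ G.neighborFinset k,
    (x j / auxN G κ x k) * (x k / auxN G κ x j) * (auxN G κ x k - auxN G κ x j) ^ 2

noncomputable def auxRate (κ : ℝ) (x : Fin L → ℝ) (i : Fin L) : ℝ :=
  ∑ k ∈ G.neighborFinset i, (x k / auxN G κ x k - x k / auxN G κ x i)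

theorem auxF_zero_one (x : Fin L → ℝ) :
    auxF G κ 0 1 x = fun i => auxRate G κ x i * x i := by
  funext i
  simp only [auxF, auxRate, zero_mul, one_mul, zero_add, Finset.sum_mul]
  exact Finset.sum_congr rfl fun k _ => by ring

theorem continuous_auxN (i : Fin L) : Continuous fun x => auxN G κ x i :=
  continuous_const.add (continuous_finsetSum _ fun j _ => continuous_apply j)

theorem auxN_pos (hκ : 0 < κ) {x : Fin L → ℝ} (hx : 0 ≤ x) (i : Fin L) : 0 < auxN G κ x i :=
  add_pos_of_pos_of_nonneg hκ (Finset.sum_nonneg fun j _ => hx j)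

theorem continuousOn_auxRate :
    ContinuousOn (auxRate G κ) {x | ∀ j, 0 < auxN G κ x j} := by
  refine continuousOn_pi.2 fun i => continuousOn_finsetSum _ fun k _ => ?_
  refine ((continuous_apply k).continuousOn.div (continuous_auxN G k).continuousOn ?_).sub
    ((continuous_apply k).continuousOn.div (continuous_auxN G i).continuousOn ?_) <;>
  exact fun x hx => (hx _).ne'

theorem isOpen_setOf_auxN_pos : IsOpen {x : Fin L → ℝ | ∀ j, 0 < auxN G κ x j} := by
  simp only [Set.ofPred_forall]
  exact isOpen_iInter_of_finite fun j => isOpen_lt continuous_const (continuous_auxN G j)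

theorem auxin_nonneg (hκ : 0 < κ) {a : ℝ → Fin L → ℝ}
    (hderiv : ∀ t, 0 ≤ t → HasDerivAt a (auxF G κ 0 1 (a t)) t) (h₀ : 0 ≤ a 0) :
    ∀ t, 0 ≤ t → 0 ≤ a t := by
  simp only [auxF_zero_one] at hderiv
  exact nonneg_of_hasDerivAt_kolmogorov (isOpen_setOf_auxN_pos G)
    (fun x hx => auxN_pos G hκ hx) (continuousOn_auxRate G) hderiv h₀

theorem hasDerivAt_auxH_comp {a : ℝ → Fin L → ℝ} {v : Fin L → ℝ} {t : ℝ}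
    (ha : HasDerivAt a v t) :
    HasDerivAt (fun s => auxH G κ (a s)) (-∑ k, auxN G κ (a t) k * v k) t := by
  have hcoord : ∀ i, HasDerivAt (fun s => a s i) (v i) t := fun i => hasDerivAt_pi.1 ha i
  have hH : HasDerivAt (fun s => auxH G κ (a s)) (-κ * ∑ k, v k - (1 / 2) *
      ∑ k, ∑ j ∈ G.neighborFinset k, (v j * a t k + a t j * v k)) t :=
    ((HasDerivAt.fun_sum fun k _ => hcoord k).const_mul (-κ)).sub
      ((HasDerivAt.fun_sum fun k _ =>
        HasDerivAt.fun_sum fun j _ => (hcoord j).mul (hcoord k)).const_mul (1 / 2 : ℝ))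
  convert hH using 1
  simp only [auxN, add_mul, Finset.sum_add_distrib, Finset.sum_mul, ← Finset.mul_sum]
  rw [G.sum_sum_neighborFinset_comm fun j k => v j * a t k]
  simp only [mul_comm (v _) (a t _)]
  ring

theorem sum_auxN_mul_auxF {x : Fin L → ℝ} (hN : ∀ j, auxN G κ x j ≠ 0) :
    ∑ k, auxN G κ x k * auxF G κ 0 1 x k = (1 / 2) * auxDissipation G κ x := by
  set N := auxN G κ x with hN_def
  have hterm : ∀ k,
      N k * auxF G κ 0 1 x k = ∑ j ∈ G.neighborFinset k, x j * x k * (N k / N j - 1) := by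
    intro k
    simp only [auxF, ← hN_def, zero_mul, one_mul, zero_add, Finset.sum_const_zero, Finset.mul_sum]
    refine Finset.sum_congr rfl fun j _ => ?_
    field_simp [hN j, hN k]
  have hsymm : ∀ k j, x j * x k * (N k / N j - 1) + x k * x j * (N j / N k - 1)
      = (x j / N k) * (x k / N j) * (N k - N j) ^ 2 := by
    intro k j
    field_simp [hN j, hN k]
    ring
  calc ∑ k, N k * auxF G κ 0 1 x k
      = ∑ k, ∑ j ∈ G.neighborFinset k, x j * x k * (N k / N j - 1) :=
        Finset.sum_congr rfl fun k _ => hterm k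
    _ = (1 / 2) * ∑ k, ∑ j ∈ G.neighborFinset k,
          (x j * x k * (N k / N j - 1) + x k * x j * (N j / N k - 1)) := by
        simp only [Finset.sum_add_distrib]
        rw [G.sum_sum_neighborFinset_comm fun j k => x j * x k * (N k / N j - 1)]
        ring
    _ = (1 / 2) * auxDissipation G κ x := by simp only [hsymm]; rfl

theorem auxDissipation_nonneg (hκ : 0 ≤ κ) {x : Fin L → ℝ} (hx : 0 ≤ x) :
    0 ≤ auxDissipation G κ x := by
  have hN : ∀ j, 0 ≤ auxN G κ x j := fun j => add_nonneg hκ (Finset.sum_nonneg fun i _ => hx i)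
  exact Finset.sum_nonneg fun k _ => Finset.sum_nonneg fun j _ =>
    mul_nonneg (mul_nonneg (div_nonneg (hx j) (hN k)) (div_nonneg (hx k) (hN j))) (sq_nonneg _)

end Auxin

theorem auxin_lyapunov_general {L : ℕ} (G : SimpleGraph (Fin L)) [DecidableRel G.Adj]
    (κ : ℝ) (hκ : 0 < κ)
    (a : ℝ → Fin L → ℝ)
    (hderiv : ∀ t, 0 ≤ t → HasDerivAt a (auxF G κ 0 1 (a t)) t)
    (hnonneg : ∀ i, 0 ≤ a 0 i) :
    ∀ t, 0 ≤ t →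
      HasDerivAt
        (fun s => -κ * ∑ k, a s k -
          (1 / 2) * ∑ k, ∑ j ∈ G.neighborFinset k, a s j * a s k)
        (-(1 / 2) * ∑ k, ∑ j ∈ G.neighborFinset k,
          (a t j / auxN G κ (a t) k) * (a t k / auxN G κ (a t) j) *
            (auxN G κ (a t) k - auxN G κ (a t) j) ^ 2) t ∧
      -(1 / 2) * ∑ k, ∑ j ∈ G.neighborFinset k,
          (a t j / auxN G κ (a t) k) * (a t k / auxN G κ (a t) j) *
            (auxN G κ (a t) k - auxN G κ (a t) j) ^ 2 ≤ 0 := by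
  intro t ht
  have hpos : 0 ≤ a t := auxin_nonneg G hκ hderiv hnonneg t ht
  have hH := hasDerivAt_auxH_comp G (κ := κ) (hderiv t ht)
  rw [sum_auxN_mul_auxF G fun j => (auxN_pos G hκ hpos j).ne', ← neg_mul] at hH
  exact ⟨hH, mul_nonpos_of_nonpos_of_nonneg (by norm_num) (auxDissipation_nonneg G hκ.le hpos)⟩

/-- For pure transport (`D = 0`, `T = 1`),
`H(a) = −κ·∑_k a_k − (1/2)·∑_k ∑_{j~k} a_j a_k` is a Lyapunov function: along any
nonnegative solution, `(d/dt) H(a(t)) = −(1/2)·∑_k ∑_{j~k} q_{kj} q_{jk} (N_k − N_j)² ≤ 0`. -/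
theorem auxin_lyapunov {L : ℕ} (hL : 1 ≤ L) (G : SimpleGraph (Fin L)) [DecidableRel G.Adj]
    (κ : ℝ) (hκ : 0 < κ)
    (a : ℝ → Fin L → ℝ)
    (hderiv : ∀ t, 0 ≤ t → HasDerivAt a (auxF G κ 0 1 (a t)) t)
    (hnonneg : ∀ i, 0 ≤ a 0 i) :
    ∀ t, 0 ≤ t →
      HasDerivAt
        (fun s => -κ * ∑ k, a s k -
          (1 / 2) * ∑ k, ∑ j ∈ G.neighborFinset k, a s j * a s k)
        (-(1 / 2) * ∑ k, ∑ j ∈ G.neighborFinset k,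
          (a t j / auxN G κ (a t) k) * (a t k / auxN G κ (a t) j) *
            (auxN G κ (a t) k - auxN G κ (a t) j) ^ 2) t ∧
      -(1 / 2) * ∑ k, ∑ j ∈ G.neighborFinset k,
          (a t j / auxN G κ (a t) k) * (a t k / auxN G κ (a t) j) *
            (auxN G κ (a t) k - auxN G κ (a t) j) ^ 2 ≤ 0 :=
  auxin_lyapunov_general G κ hκ a hderiv hnonneg
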